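/- The number of monic irreducible polynomials of degree 5 in F_9[x] whose coefficient of x⁴ and coefficient of x are both zero equals 160. That is, Ī_9(5,0,0) = 160. -/

import Mathlib

/-!
Such a polynomial is `X⁵ + a₃X³ + a₂X² + a₀`. Having degree 5, it is irreducible iff it has
no root and no monic quadratic factor `X² + bX + c`, and the latter divides it iff both
coefficients of the remainder of the division vanish, which are explicit polynomials in
`a₀, a₂, a₃, b, c`. All fields with nine elements are isomorphic, so the count may be done in the
explicit model `𝔽₃[i]`, where this criterion is decided by evaluation.
-/

open Polynomial

namespace Polynomial

section Semiring

variable {R : Type*} [Semiring R] {p : R[X]}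

theorem Monic.eq_X_sq_add_C_mul_X_add_C (hm : p.Monic) (hnd : p.natDegree = 2) :
    p = X ^ 2 + C (p.coeff 1) * X + C (p.coeff 0) := by
  rw [hm.as_sum, hnd]
  simp [Finset.sum_range_succ, add_assoc, add_comm (C (p.coeff 0))]

theorem C_mul_X_add_C_eq_zero_iff {a b : R} : C a * X + C b = 0 ↔ a = 0 ∧ b = 0 := by
  refine ⟨fun h ↦ ⟨by simpa using congr_arg (coeff · 1) h, by simpa using congr_arg (coeff · 0) h⟩,
    ?_⟩
  rintro ⟨rfl, rfl⟩
  simp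

theorem monic_X_sq_add_C_mul_X_add_C (b c : R) : (X ^ 2 + C b * X + C c).Monic := by
  monicity!

theorem natDegree_X_sq_add_C_mul_X_add_C [Nontrivial R] (b c : R) :
    (X ^ 2 + C b * X + C c).natDegree = 2 := by
  compute_degree!

end Semiring

section Domain

variable {R : Type*} [CommRing R] [IsDomain R] {p : R[X]}

theorem Monic.irreducible_iff_of_natDegree_le_five (hp : p.Monic) (h4 : 4 ≤ p.natDegree)
    (h5 : p.natDegree ≤ 5) :
    Irreducible p ↔ (∀ t, ¬p.IsRoot t) ∧ ∀ b c, ¬X ^ 2 + C b * X + C c ∣ p := by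
  have hp1 : p ≠ 1 := by rintro rfl; simp at h4
  have hhalf : p.natDegree / 2 = 2 := by omega
  rw [hp.irreducible_iff_lt_natDegree_lt hp1, hhalf]
  constructor
  · intro h
    refine ⟨fun t ht ↦ h _ (monic_X_sub_C t) (by simp) (dvd_iff_isRoot.mpr ht), fun b c ↦ ?_⟩
    exact h _ (monic_X_sq_add_C_mul_X_add_C b c) (by simp [natDegree_X_sq_add_C_mul_X_add_C b c])
  · rintro ⟨hroot, hquad⟩ q hq hdeg hdvd
    obtain hdeg | hdeg : q.natDegree = 1 ∨ q.natDegree = 2 := by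
      simp only [Finset.mem_Ioc] at hdeg; omega
    · rw [hq.eq_X_add_C hdeg, ← sub_neg_eq_add, ← C_neg, dvd_iff_isRoot] at hdvd
      exact hroot _ hdvd
    · rw [hq.eq_X_sq_add_C_mul_X_add_C hdeg] at hdvd
      exact hquad _ _ hdvd

end Domain

end Polynomial

section Quintic

variable {R : Type*}

noncomputable def quintic [Semiring R] (a₀ a₂ a₃ : R) : R[X] :=
  X ^ 5 + C a₃ * X ^ 3 + C a₂ * X ^ 2 + C a₀

section CommSemiring

variable [CommSemiring R] (a₀ a₂ a₃ : R)

theorem monic_quintic : (quintic a₀ a₂ a₃).Monic := by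
  unfold quintic; monicity!

theorem natDegree_quintic [Nontrivial R] : (quintic a₀ a₂ a₃).natDegree = 5 := by
  unfold quintic; compute_degree!

@[simp] theorem coeff_quintic_zero : (quintic a₀ a₂ a₃).coeff 0 = a₀ := by simp [quintic]
@[simp] theorem coeff_quintic_one : (quintic a₀ a₂ a₃).coeff 1 = 0 := by simp [quintic]
@[simp] theorem coeff_quintic_two : (quintic a₀ a₂ a₃).coeff 2 = a₂ := by simp [quintic]
@[simp] theorem coeff_quintic_three : (quintic a₀ a₂ a₃).coeff 3 = a₃ := by simp [quintic]
@[simp] theorem coeff_quintic_four : (quintic a₀ a₂ a₃).coeff 4 = 0 := by simp [quintic]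

theorem eval_quintic (t : R) :
    (quintic a₀ a₂ a₃).eval t = t ^ 5 + a₃ * t ^ 3 + a₂ * t ^ 2 + a₀ := by
  simp [quintic]

theorem map_quintic {S : Type*} [Semiring S] (f : R →+* S) :
    (quintic a₀ a₂ a₃).map f = quintic (f a₀) (f a₂) (f a₃) := by
  simp [quintic]

theorem Polynomial.Monic.eq_quintic {p : R[X]} (hp : p.Monic) (h5 : p.natDegree = 5)
    (h4 : p.coeff 4 = 0) (h1 : p.coeff 1 = 0) :
    p = quintic (p.coeff 0) (p.coeff 2) (p.coeff 3) := by
  rw [hp.as_sum, h5]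
  simp [Finset.sum_range_succ, quintic, h4, h1]
  ring

end CommSemiring

section CommRing

variable [CommRing R] (a₀ a₂ a₃ : R)

theorem quintic_eq_mul_add (b c : R) : quintic a₀ a₂ a₃ =
    (X ^ 2 + C b * X + C c) *
        (X ^ 3 - C b * X ^ 2 + C (b ^ 2 - c + a₃) * X + C (a₂ + 2 * b * c - a₃ * b - b ^ 3)) +
      (C (b ^ 4 - 3 * b ^ 2 * c + c ^ 2 + a₃ * (b ^ 2 - c) - a₂ * b) * X +
        C (a₀ + b ^ 3 * c - 2 * b * c ^ 2 + a₃ * b * c - a₂ * c)) := by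
  simp only [quintic, map_add, map_sub, map_mul, map_pow, map_ofNat]
  ring

theorem X_sq_add_C_mul_X_add_C_dvd_quintic_iff [Nontrivial R] (b c : R) :
    X ^ 2 + C b * X + C c ∣ quintic a₀ a₂ a₃ ↔
      b ^ 4 - 3 * b ^ 2 * c + c ^ 2 + a₃ * (b ^ 2 - c) - a₂ * b = 0 ∧
        a₀ + b ^ 3 * c - 2 * b * c ^ 2 + a₃ * b * c - a₂ * c = 0 := by
  have hg := monic_X_sq_add_C_mul_X_add_C b c
  rw [← modByMonic_eq_zero_iff_dvd hg, (div_modByMonic_unique _ _ hg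
    ⟨(add_comm _ _).trans (quintic_eq_mul_add a₀ a₂ a₃ b c).symm, ?_⟩).2]
  · exact C_mul_X_add_C_eq_zero_iff
  · rw [degree_eq_natDegree hg.ne_zero, natDegree_X_sq_add_C_mul_X_add_C]
    exact degree_linear_lt

theorem irreducible_quintic_iff [IsDomain R] :
    Irreducible (quintic a₀ a₂ a₃) ↔
      (∀ t, t ^ 5 + a₃ * t ^ 3 + a₂ * t ^ 2 + a₀ ≠ 0) ∧
        ∀ b c, ¬(b ^ 4 - 3 * b ^ 2 * c + c ^ 2 + a₃ * (b ^ 2 - c) - a₂ * b = 0 ∧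
          a₀ + b ^ 3 * c - 2 * b * c ^ 2 + a₃ * b * c - a₂ * c = 0) := by
  rw [(monic_quintic a₀ a₂ a₃).irreducible_iff_of_natDegree_le_five
    (by rw [natDegree_quintic]; norm_num) (natDegree_quintic a₀ a₂ a₃).le]
  simp only [IsRoot, eval_quintic, X_sq_add_C_mul_X_add_C_dvd_quintic_iff]

end CommRing

noncomputable def irreducibleQuinticEquiv (R : Type*) [CommRing R] [Nontrivial R] :
    {f : R[X] // f.Monic ∧ Irreducible f ∧ f.natDegree = 5 ∧ f.coeff 4 = 0 ∧ f.coeff 1 = 0} ≃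
      {v : R × R × R // Irreducible (quintic v.1 v.2.1 v.2.2)} where
  toFun f := ⟨(f.1.coeff 0, f.1.coeff 2, f.1.coeff 3), by
    obtain ⟨f, hm, hirr, h5, h4, h1⟩ := f
    rwa [← hm.eq_quintic h5 h4 h1]⟩
  invFun v := ⟨quintic v.1.1 v.1.2.1 v.1.2.2, monic_quintic .., v.2, natDegree_quintic ..,
    coeff_quintic_four .., coeff_quintic_one ..⟩
  left_inv := fun ⟨f, hm, _, h5, h4, h1⟩ ↦ Subtype.ext (hm.eq_quintic h5 h4 h1).symm
  right_inv v := by simp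

theorem card_irreducible_quintic_congr {S : Type*} [CommRing R] [CommRing S] (e : R ≃+* S) :
    Nat.card {v : R × R × R // Irreducible (quintic v.1 v.2.1 v.2.2)} =
      Nat.card {v : S × S × S // Irreducible (quintic v.1 v.2.1 v.2.2)} := by
  refine Nat.card_congr <| (e.toEquiv.prodCongr (e.toEquiv.prodCongr e.toEquiv)).subtypeEquiv ?_
  rintro ⟨a₀, a₂, a₃⟩
  rw [← MulEquiv.irreducible_iff (mapEquiv e)]
  simp [map_quintic]

end Quintic

/-- `𝔽₃[i]` with `i ^ 2 = -1`, a field since `-1` is not a square modulo `3`. -/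
structure GF9 where
  re : ZMod 3
  im : ZMod 3
deriving DecidableEq, Fintype

namespace GF9

instance : Zero GF9 := ⟨⟨0, 0⟩⟩
instance : One GF9 := ⟨⟨1, 0⟩⟩
instance : Add GF9 := ⟨fun a b ↦ ⟨a.re + b.re, a.im + b.im⟩⟩
instance : Neg GF9 := ⟨fun a ↦ ⟨-a.re, -a.im⟩⟩
instance : Mul GF9 := ⟨fun a b ↦ ⟨a.re * b.re - a.im * b.im, a.re * b.im + a.im * b.re⟩⟩

instance : CommRing GF9 where
  nsmul := nsmulRec
  zsmul := zsmulRec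
  add_assoc := by decide +kernel
  zero_add := by decide +kernel
  add_zero := by decide +kernel
  add_comm := by decide +kernel
  neg_add_cancel := by decide +kernel
  mul_assoc := by decide +kernel
  one_mul := by decide +kernel
  mul_one := by decide +kernel
  left_distrib := by decide +kernel
  right_distrib := by decide +kernel
  mul_comm := by decide +kernel
  zero_mul := by decide +kernel
  mul_zero := by decide +kernel

noncomputable instance : Field GF9 :=
  IsField.toField ⟨⟨0, 1, by decide⟩, mul_comm, fun {a} ↦ by revert a; decide⟩

theorem card_eq : Fintype.card GF9 = 9 := rfl

theorem card_irreducible_quintic :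
    Nat.card {v : GF9 × GF9 × GF9 // Irreducible (quintic v.1 v.2.1 v.2.2)} = 160 := by
  simp only [irreducible_quintic_iff, Nat.card_eq_fintype_card]
  decide +kernel

end GF9

/-- `Ī_9(5,0,0) = 160`: for `F9` the field with `9` elements, the number
of monic irreducible polynomials of degree `5` in `F9[x]` whose coefficients of `x⁴` and
`x` are both zero equals `160`. -/
theorem stmt14 (F9 : Type) [Field F9] [Fintype F9] (h9 : Fintype.card F9 = 9) :
    Nat.card {f : Polynomial F9 // f.Monic ∧ Irreducible f ∧ f.natDegree = 5 ∧
      f.coeff 4 = 0 ∧ f.coeff 1 = 0} = 160 := by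
  rw [Nat.card_congr (irreducibleQuinticEquiv F9),
    card_irreducible_quintic_congr (FiniteField.ringEquivOfCardEq (h9.trans GF9.card_eq.symm))]
  exact GF9.card_irreducible_quintic
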